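/- arXiv:2208.04054 — 4 statements merged into one kernel-verified Lean document; each statement's English description precedes it below -/
import Mathlib

section
/- Let X and Y be identically distributed ℝ^d-valued random vectors whose norm is regularly varying with index α > 0, and assume X and Y are asymptotically independent, i.e. lim_{x→∞} P(‖X‖ > x, ‖Y‖ > x)/P(‖X‖ > x) = 0. Then the random vector (X,Y) ∈ ℝ^{2d} has regularly varying norm with the same index α; that is, for every u > 0, lim_{x→∞} P(max(‖X‖,‖Y‖) > ux)/P(max(‖X‖,‖Y‖) > x) = u^{-α}. -/
open MeasureTheory Filter

noncomputable section

/-- An `ℝ^d`-valued random vector has regularly varying (max-)norm with index `α > 0`: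
`P(‖X‖ > x) > 0` for all `x > 0` and `P(‖X‖ > ux)/P(‖X‖ > x) → u^{-α}` as `x → ∞`. -/
def RegVaryingNorm {Ω : Type*} [MeasurableSpace Ω] (P : Measure Ω) {d : ℕ}
    (X : Ω → (Fin d → ℝ)) (α : ℝ) : Prop :=
  (∀ x : ℝ, 0 < x → 0 < (P {ω | x < ‖X ω‖}).toReal) ∧
  (∀ u : ℝ, 0 < u →
    Tendsto (fun x : ℝ => (P {ω | u * x < ‖X ω‖}).toReal / (P {ω | x < ‖X ω‖}).toReal)
      atTop (nhds (u ^ (-α))))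

open ProbabilityTheory Topology

/-!
Since `X` and `Y` have the same law, `P(max(‖X‖,‖Y‖) > x) = 2 P(‖X‖ > x) - P(‖X‖ > x, ‖Y‖ > x)`
by inclusion–exclusion, so asymptotic independence makes the tail of `max(‖X‖,‖Y‖)` equivalent
to twice the tail of `‖X‖`. Regular variation is invariant under tail equivalence: writing
`g(ux)/g(x) = g(ux)/f(ux) · f(ux)/f(x) · f(x)/g(x)`, the outer factors tend to `2` and `1/2`.
-/

lemma tendsto_div_comp_mul_of_tendsto_div {f g : ℝ → ℝ} {c L u : ℝ} (hu : 0 < u) (hc : c ≠ 0)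
    (hf : ∀ᶠ x in atTop, f x ≠ 0) (hgf : Tendsto (fun x => g x / f x) atTop (𝓝 c))
    (hfu : Tendsto (fun x => f (u * x) / f x) atTop (𝓝 L)) :
    Tendsto (fun x => g (u * x) / g x) atTop (𝓝 L) := by
  have hmul : Tendsto (fun x => u * x) atTop atTop := tendsto_id.const_mul_atTop hu
  have hfg : Tendsto (fun x => f x / g x) atTop (𝓝 c⁻¹) := by
    simpa only [inv_div] using hgf.inv₀ hc
  have hprod := ((hgf.comp hmul).mul hfu).mul hfg
  rw [mul_right_comm, mul_inv_cancel₀ hc, one_mul] at hprod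
  refine hprod.congr' ?_
  filter_upwards [hf, hmul.eventually hf] with x hfx hfux
  simp only [Function.comp_apply]
  field_simp

namespace ProbabilityTheory.IdentDistrib

variable {Ω : Type*} [MeasurableSpace Ω] {P : Measure Ω} [IsFiniteMeasure P] {U V : Ω → ℝ}

lemma measureReal_lt_max (hUV : IdentDistrib U V P P) (x : ℝ) :
    P.real {ω | x < max (U ω) (V ω)} =
      2 * P.real {ω | x < U ω} - P.real {ω | x < U ω ∧ x < V ω} := by
  have hVU : P.real {ω | x < V ω} = P.real {ω | x < U ω} :=
    congrArg ENNReal.toReal (hUV.measure_mem_eq measurableSet_Ioi).symm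
  have hincl : P.real ({ω | x < U ω} ∪ {ω | x < V ω}) + P.real ({ω | x < U ω} ∩ {ω | x < V ω}) =
      P.real {ω | x < U ω} + P.real {ω | x < V ω} :=
    measureReal_union_add_inter₀ (hUV.aemeasurable_snd.nullMeasurableSet_preimage measurableSet_Ioi)
  have hmax : {ω | x < max (U ω) (V ω)} = {ω | x < U ω} ∪ {ω | x < V ω} :=
    Set.ext fun _ => lt_max_iff (α := ℝ)
  rw [hmax, Set.ofPred_and]
  linarith

lemma tendsto_measureReal_lt_max_div (hUV : IdentDistrib U V P P)
    (hpos : ∀ᶠ x in atTop, P.real {ω | x < U ω} ≠ 0)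
    (hai : Tendsto (fun x => P.real {ω | x < U ω ∧ x < V ω} / P.real {ω | x < U ω})
      atTop (𝓝 0)) :
    Tendsto (fun x => P.real {ω | x < max (U ω) (V ω)} / P.real {ω | x < U ω})
      atTop (𝓝 2) := by
  have h := (tendsto_const_nhds (x := (2 : ℝ))).sub hai
  rw [sub_zero] at h
  refine h.congr' ?_
  filter_upwards [hpos] with x hx
  rw [hUV.measureReal_lt_max, sub_div, mul_div_cancel_right₀ _ hx]

end ProbabilityTheory.IdentDistrib

theorem stmt0_general {Ω : Type*} [MeasurableSpace Ω] (P : Measure Ω) [IsProbabilityMeasure P]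
    {d : ℕ} (X Y : Ω → (Fin d → ℝ)) (hXmeas : Measurable X) (hYmeas : Measurable Y)
    (hid : Measure.map X P = Measure.map Y P)
    {α : ℝ} (hrv : RegVaryingNorm P X α)
    (hai : Tendsto (fun x : ℝ =>
        (P {ω | x < ‖X ω‖ ∧ x < ‖Y ω‖}).toReal / (P {ω | x < ‖X ω‖}).toReal)
      atTop (nhds 0)) :
    ∀ u : ℝ, 0 < u →
      Tendsto (fun x : ℝ =>
          (P {ω | u * x < max ‖X ω‖ ‖Y ω‖}).toReal /
            (P {ω | x < max ‖X ω‖ ‖Y ω‖}).toReal)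
        atTop (nhds (u ^ (-α))) := by
  intro u hu
  obtain ⟨hpos, hlim⟩ := hrv
  have hXY : IdentDistrib X Y P P := ⟨hXmeas.aemeasurable, hYmeas.aemeasurable, hid⟩
  have hpos' : ∀ᶠ x in atTop, P.real {ω | x < ‖X ω‖} ≠ 0 := by
    filter_upwards [eventually_gt_atTop 0] with x hx using (hpos x hx).ne'
  exact tendsto_div_comp_mul_of_tendsto_div hu two_ne_zero hpos'
    ((hXY.comp measurable_norm).tendsto_measureReal_lt_max_div hpos' hai) (hlim u hu)

/-- Proposition 2.1 (cf. Proposition 2.1.8 in Kulik–Soulier): if `X` and `Y` are identically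
distributed random vectors with regularly varying norm of index `α > 0` and they are
asymptotically independent, then `(X, Y)` has regularly varying norm with the same index `α`,
i.e. for every `u > 0`,
`P(max(‖X‖,‖Y‖) > ux)/P(max(‖X‖,‖Y‖) > x) → u^{-α}` as `x → ∞`. -/
theorem stmt0 {Ω : Type*} [MeasurableSpace Ω] (P : Measure Ω) [IsProbabilityMeasure P]
    {d : ℕ} (X Y : Ω → (Fin d → ℝ)) (hXmeas : Measurable X) (hYmeas : Measurable Y)
    (hid : Measure.map X P = Measure.map Y P)
    {α : ℝ} (hα : 0 < α) (hrv : RegVaryingNorm P X α)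
    (hai : Tendsto (fun x : ℝ =>
        (P {ω | x < ‖X ω‖ ∧ x < ‖Y ω‖}).toReal / (P {ω | x < ‖X ω‖}).toReal)
      atTop (nhds 0)) :
    ∀ u : ℝ, 0 < u →
      Tendsto (fun x : ℝ =>
          (P {ω | u * x < max ‖X ω‖ ‖Y ω‖}).toReal /
            (P {ω | x < max ‖X ω‖ ‖Y ω‖}).toReal)
        atTop (nhds (u ^ (-α))) :=
  stmt0_general P X Y hXmeas hYmeas hid hrv hai

end
end

section
/- Let ξ be an ℝ^d-valued random vector whose norm is regularly varying with index α > 0, and let (a_n) be a sequence of positive reals with lim_{n→∞} n·P(‖ξ‖ > a_n) = 1. Then for every δ ∈ (0,α), limsup_{n→∞} n·E[(‖ξ‖/a_n)^δ · 1_{{‖ξ‖ > a_n}}] ≤ α/(α − δ). -/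
/-!
Write `T x = P(‖ξ‖ > x)` and fix `u > 1`, `v = u ^ δ`. Cutting `{‖ξ‖ > a}` into the shells
`uᵏ a < ‖ξ‖ ≤ uᵏ⁺¹ a` gives
`E[(‖ξ‖/a)^δ; ‖ξ‖ > a] ≤ T a + ∑ₖ (v - 1) vᵏ T (uᵏ a)`.
Regular variation gives `T (u x) ≤ r T x` for large `x` as soon as `r > u ^ (-α)`, so for
large `a` the sum is geometric and the expectation is at most
`T a · (1 + (v - 1) / (1 - v r))`. As `n T (aₙ) → 1` (which forces `aₙ → ∞`), the limsup is
at most this constant; letting `r ↓ u ^ (-α)` and then `u ↓ 1` turns it into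
`1 + δ / (α - δ) = α / (α - δ)`.
-/

open MeasureTheory Filter ENNReal

noncomputable section

open Topology

lemma Antitone.tendsto_atTop_of_tendsto_comp {β ι : Type*} [LinearOrder β]
    [TopologicalSpace β] [OrderTopology β] {f : ℝ → β} (hf : Antitone f) {c : β}
    (hc : ∀ᶠ x in atTop, c < f x) {l : Filter ι} {a : ι → ℝ}
    (ha : Tendsto (fun i ↦ f (a i)) l (𝓝 c)) :
    Tendsto a l atTop := by
  refine tendsto_atTop.2 fun b ↦ ?_
  obtain ⟨x₀, hx₀⟩ := eventually_atTop.1 hc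
  filter_upwards [ha.eventually_lt_const (hx₀ (max b x₀) (le_max_right _ _))] with i hi
  exact (le_max_left b x₀).trans (hf.reflect_lt hi).le

lemma ENNReal.tendsto_zero_of_tendsto_natCast_mul {x : ℕ → ℝ≥0∞} {c : ℝ≥0∞} (hc : c ≠ ∞)
    (h : Tendsto (fun n : ℕ ↦ (n : ℝ≥0∞) * x n) atTop (𝓝 c)) : Tendsto x atTop (𝓝 0) := by
  have h0 := ENNReal.Tendsto.mul ENNReal.tendsto_inv_nat_nhds_zero (Or.inr hc) h
    (Or.inr zero_ne_top)
  rw [zero_mul] at h0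
  refine h0.congr' ?_
  filter_upwards [eventually_ne_atTop 0] with n hn
  exact ENNReal.inv_mul_cancel_left (Nat.cast_ne_zero.2 hn) (natCast_ne_top n)

lemma apply_pow_mul_le_pow_mul {f : ℝ → ℝ≥0∞} {u y₀ : ℝ} {r : ℝ≥0∞} (hu : 1 ≤ u)
    (hy₀ : 0 ≤ y₀) (h : ∀ y, y₀ ≤ y → f (u * y) ≤ r * f y) (k : ℕ) {y : ℝ} (hy : y₀ ≤ y) :
    f (u ^ k * y) ≤ r ^ k * f y := by
  induction k with
  | zero => simp
  | succ k ih =>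
    have hky : y₀ ≤ u ^ k * y :=
      hy.trans (le_mul_of_one_le_left (hy₀.trans hy) (one_le_pow₀ hu))
    calc f (u ^ (k + 1) * y) = f (u * (u ^ k * y)) := by ring_nf
      _ ≤ r * f (u ^ k * y) := h _ hky
      _ ≤ r * (r ^ k * f y) := by gcongr
      _ = r ^ (k + 1) * f y := by ring

lemma ENNReal.one_add_sum_tsub_mul_pow {v : ℝ≥0∞} (hv : 1 ≤ v) (n : ℕ) :
    1 + ∑ k ∈ Finset.range n, (v - 1) * v ^ k = v ^ n := by
  induction n with
  | zero => simp
  | succ n ih =>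
    rw [Finset.sum_range_succ, ← add_assoc, ih, ← one_add_mul, add_tsub_cancel_of_le hv,
      pow_succ, mul_comm]

lemma ofReal_rpow_le_one_add_tsum {u δ y : ℝ} (hu : 1 < u) (hδ : 0 ≤ δ) (hy : 0 ≤ y) :
    ENNReal.ofReal (y ^ δ) ≤ 1 + ∑' k : ℕ,
      if u ^ k < y then (ENNReal.ofReal (u ^ δ) - 1) * ENNReal.ofReal (u ^ δ) ^ k else 0 := by
  set v := ENNReal.ofReal (u ^ δ)
  have hv : 1 ≤ v := by
    rw [← ofReal_one]; exact ofReal_le_ofReal (Real.one_le_rpow hu.le hδ)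
  have hex : ∃ n : ℕ, y ≤ u ^ n := (pow_unbounded_of_one_lt y hu).imp fun _ ↦ le_of_lt
  calc ENNReal.ofReal (y ^ δ) ≤ ENNReal.ofReal ((u ^ Nat.find hex) ^ δ) :=
        ofReal_le_ofReal (Real.rpow_le_rpow hy (Nat.find_spec hex) hδ)
    _ = v ^ Nat.find hex := by
        rw [← Real.rpow_pow_comm (by linarith), ofReal_pow (by positivity)]
    _ = 1 + ∑ k ∈ Finset.range (Nat.find hex),
          if u ^ k < y then (v - 1) * v ^ k else 0 := by
        rw [← ENNReal.one_add_sum_tsub_mul_pow hv]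
        refine congrArg _ (Finset.sum_congr rfl fun k hk ↦ ?_)
        rw [if_pos (not_le.1 (Nat.find_min hex (Finset.mem_range.1 hk)))]
    _ ≤ _ := add_le_add_right (ENNReal.sum_le_tsum _) 1

section TailIntegral

variable {Ω : Type*} [MeasurableSpace Ω] {μ : Measure Ω} {X : Ω → ℝ} {u δ : ℝ}

lemma setLIntegral_rpow_div_le_tsum (hX : Measurable X) {a : ℝ} (ha : 0 < a) (hu : 1 < u)
    (hδ : 0 ≤ δ) :
    ∫⁻ ω in {ω | a < X ω}, ENNReal.ofReal ((X ω / a) ^ δ) ∂μ ≤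
      μ {ω | a < X ω} + ∑' k : ℕ,
        (ENNReal.ofReal (u ^ δ) - 1) * ENNReal.ofReal (u ^ δ) ^ k * μ {ω | u ^ k * a < X ω} := by
  set c : ℕ → ℝ≥0∞ := fun k ↦ (ENNReal.ofReal (u ^ δ) - 1) * ENNReal.ofReal (u ^ δ) ^ k
  have hmeas (b : ℝ) : MeasurableSet {ω | b < X ω} := measurableSet_lt measurable_const hX
  calc ∫⁻ ω in {ω | a < X ω}, ENNReal.ofReal ((X ω / a) ^ δ) ∂μ
      ≤ ∫⁻ ω in {ω | a < X ω},
          1 + ∑' k, {ω | u ^ k * a < X ω}.indicator (fun _ ↦ c k) ω ∂μ := by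
        refine setLIntegral_mono (by measurability) fun ω hω ↦ ?_
        convert ofReal_rpow_le_one_add_tsum hu hδ (div_nonneg (ha.trans hω).le ha.le)
          using 4 with k
        simp only [Set.indicator_apply, Set.mem_ofPred_eq, lt_div_iff₀ ha]
        rfl
    _ = μ {ω | a < X ω} + ∑' k, c k * μ {ω | u ^ k * a < X ω} := by
        rw [lintegral_add_left measurable_const, setLIntegral_one,
          lintegral_tsum fun k ↦ (measurable_const.indicator (hmeas _)).aemeasurable]
        refine congrArg _ (tsum_congr fun k ↦ ?_)
        have hsub : {ω | u ^ k * a < X ω} ⊆ {ω | a < X ω} := fun ω hω ↦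
          (le_mul_of_one_le_left ha.le (one_le_pow₀ hu.le)).trans_lt hω
        rw [lintegral_indicator_const (hmeas _), Measure.restrict_apply (hmeas _),
          Set.inter_eq_self_of_subset_left hsub]

lemma setLIntegral_rpow_div_le_of_tail_le (hX : Measurable X) {a : ℝ} (ha : 0 < a)
    (hu : 1 < u) (hδ : 0 ≤ δ) {r : ℝ≥0∞}
    (htail : ∀ k : ℕ, μ {ω | u ^ k * a < X ω} ≤ r ^ k * μ {ω | a < X ω}) :
    ∫⁻ ω in {ω | a < X ω}, ENNReal.ofReal ((X ω / a) ^ δ) ∂μ ≤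
      μ {ω | a < X ω} *
        (1 + (ENNReal.ofReal (u ^ δ) - 1) * (1 - ENNReal.ofReal (u ^ δ) * r)⁻¹) := by
  set v := ENNReal.ofReal (u ^ δ)
  set T := μ {ω | a < X ω}
  calc ∫⁻ ω in {ω | a < X ω}, ENNReal.ofReal ((X ω / a) ^ δ) ∂μ
      ≤ T + ∑' k : ℕ, (v - 1) * v ^ k * μ {ω | u ^ k * a < X ω} :=
        setLIntegral_rpow_div_le_tsum hX ha hu hδ
    _ ≤ T + ∑' k : ℕ, (v - 1) * T * (v * r) ^ k := by
        refine add_le_add_right (ENNReal.tsum_le_tsum fun k ↦ ?_) T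
        calc (v - 1) * v ^ k * μ {ω | u ^ k * a < X ω}
            ≤ (v - 1) * v ^ k * (r ^ k * T) := by gcongr; exact htail k
          _ = (v - 1) * T * (v * r) ^ k := by ring
    _ = T * (1 + (v - 1) * (1 - v * r)⁻¹) := by
        rw [ENNReal.tsum_mul_left, ENNReal.tsum_geometric]; ring

lemma limsup_mul_setLIntegral_rpow_div_le (hX : Measurable X) {a : ℕ → ℝ}
    (ha : Tendsto a atTop atTop)
    (hlim : Tendsto (fun n : ℕ ↦ (n : ℝ≥0∞) * μ {ω | a n < X ω}) atTop (𝓝 1))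
    (hu : 1 < u) (hδ : 0 ≤ δ) {r : ℝ≥0∞}
    (hr : ∀ᶠ x in atTop, μ {ω | u * x < X ω} ≤ r * μ {ω | x < X ω}) :
    limsup (fun n : ℕ ↦ (n : ℝ≥0∞) *
        ∫⁻ ω in {ω | a n < X ω}, ENNReal.ofReal ((X ω / a n) ^ δ) ∂μ) atTop ≤
      1 + (ENNReal.ofReal (u ^ δ) - 1) * (1 - ENNReal.ofReal (u ^ δ) * r)⁻¹ := by
  set B := 1 + (ENNReal.ofReal (u ^ δ) - 1) * (1 - ENNReal.ofReal (u ^ δ) * r)⁻¹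
  obtain ⟨x₀, hx₀⟩ := eventually_atTop.1 (hr.and (eventually_gt_atTop 0))
  have hx₀_pos : 0 < x₀ := (hx₀ x₀ le_rfl).2
  have hbound : ∀ᶠ n : ℕ in atTop, (n : ℝ≥0∞) *
      ∫⁻ ω in {ω | a n < X ω}, ENNReal.ofReal ((X ω / a n) ^ δ) ∂μ ≤
        (n : ℝ≥0∞) * μ {ω | a n < X ω} * B := by
    filter_upwards [ha.eventually_ge_atTop x₀] with n hn
    rw [mul_assoc]
    gcongr
    exact setLIntegral_rpow_div_le_of_tail_le hX (hx₀_pos.trans_le hn) hu hδ fun k ↦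
      apply_pow_mul_le_pow_mul (f := fun x ↦ μ {ω | x < X ω}) hu.le hx₀_pos.le
        (fun y hy ↦ (hx₀ y hy).1) k hn
  calc _ ≤ limsup (fun n : ℕ ↦ (n : ℝ≥0∞) * μ {ω | a n < X ω} * B) atTop :=
        limsup_le_limsup hbound
    _ = B := by simpa using (ENNReal.Tendsto.mul_const hlim (Or.inl one_ne_zero)).limsup_eq

end TailIntegral

lemma ENNReal.one_add_ofReal_tsub_mul_inv {v r : ℝ} (hv : 1 ≤ v) (hr : 0 ≤ r)
    (hvr : v * r < 1) :
    1 + (ENNReal.ofReal v - 1) * (1 - ENNReal.ofReal v * ENNReal.ofReal r)⁻¹ =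
      ENNReal.ofReal (1 + (v - 1) / (1 - v * r)) := by
  rw [ofReal_add zero_le_one (div_nonneg (by linarith) (by linarith)), ofReal_one,
    div_eq_mul_inv, ofReal_mul (by linarith), ofReal_inv_of_pos (by linarith),
    ofReal_sub _ zero_le_one, ofReal_one, ofReal_sub _ (by positivity), ofReal_one,
    ofReal_mul (by linarith)]

lemma tendsto_rpow_sub_one_div_sub_one (p : ℝ) :
    Tendsto (fun u : ℝ ↦ (u ^ p - 1) / (u - 1)) (𝓝[≠] 1) (𝓝 p) := by
  have h := hasDerivAt_iff_tendsto_slope.1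
    (Real.hasDerivAt_rpow_const (p := p) (Or.inl one_ne_zero))
  rw [Real.one_rpow, mul_one] at h
  exact h.congr fun u ↦ by rw [slope_def_field, Real.one_rpow]

lemma tendsto_rpow_sub_one_div_rpow_sub_one (p : ℝ) {q : ℝ} (hq : q ≠ 0) :
    Tendsto (fun u : ℝ ↦ (u ^ p - 1) / (u ^ q - 1)) (𝓝[≠] 1) (𝓝 (p / q)) := by
  refine ((tendsto_rpow_sub_one_div_sub_one p).div
    (tendsto_rpow_sub_one_div_sub_one q) hq).congr' ?_
  filter_upwards [self_mem_nhdsWithin] with u hu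
  exact div_div_div_cancel_right₀ (sub_ne_zero.2 hu) _ _

lemma tendsto_one_add_rpow_sub_one_div_one_sub_rpow {δ α : ℝ} (hδα : δ < α) :
    Tendsto (fun u : ℝ ↦ 1 + (u ^ δ - 1) / (1 - u ^ (δ - α))) (𝓝[>] 1)
      (𝓝 (α / (α - δ))) := by
  have h := ((tendsto_rpow_sub_one_div_rpow_sub_one δ (sub_ne_zero.2 hδα.ne)).mono_left
    (nhdsWithin_mono _ fun _ ↦ ne_of_gt)).const_sub 1
  have hlim : 1 - δ / (δ - α) = α / (α - δ) := by
    rw [← neg_sub α δ, div_neg, sub_neg_eq_add, one_add_div (sub_ne_zero.2 hδα.ne'),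
      sub_add_cancel]
  rw [← hlim]
  refine h.congr fun u ↦ ?_
  rw [← neg_sub (u ^ (δ - α)), div_neg]
  ring

section RegVarying

variable {Ω : Type*} [MeasurableSpace Ω] {P : Measure Ω} {d : ℕ} {ξ : Ω → Fin d → ℝ} {α : ℝ}

lemma RegVaryingNorm.measure_pos (hrv : RegVaryingNorm P ξ α) {x : ℝ} (hx : 0 < x) :
    0 < P {ω | x < ‖ξ ω‖} :=
  (ENNReal.toReal_pos_iff.1 (hrv.1 x hx)).1

lemma RegVaryingNorm.eventually_measure_le_mul [IsFiniteMeasure P] (hrv : RegVaryingNorm P ξ α)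
    {u r : ℝ} (hu : 0 < u) (hr : u ^ (-α) < r) :
    ∀ᶠ x in atTop, P {ω | u * x < ‖ξ ω‖} ≤ ENNReal.ofReal r * P {ω | x < ‖ξ ω‖} := by
  filter_upwards [(hrv.2 u hu).eventually_lt_const hr, eventually_gt_atTop 0] with x hx hx0
  rw [div_lt_iff₀ (hrv.1 x hx0)] at hx
  rw [← ofReal_toReal (measure_ne_top P {ω | u * x < ‖ξ ω‖}),
    ← ofReal_toReal (measure_ne_top P {ω | x < ‖ξ ω‖}),
    ← ofReal_mul ((Real.rpow_pos_of_pos hu _).trans hr).le]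
  exact ofReal_le_ofReal hx.le

variable {a : ℕ → ℝ}

lemma RegVaryingNorm.tendsto_atTop (hrv : RegVaryingNorm P ξ α)
    (hlim : Tendsto (fun n : ℕ ↦ (n : ℝ≥0∞) * P {ω | a n < ‖ξ ω‖}) atTop (𝓝 1)) :
    Tendsto a atTop atTop :=
  Antitone.tendsto_atTop_of_tendsto_comp (f := fun x ↦ P {ω | x < ‖ξ ω‖})
    (fun _ _ hxy ↦ measure_mono fun _ hω ↦ hxy.trans_lt hω)
    ((eventually_gt_atTop 0).mono fun _ ↦ hrv.measure_pos)
    (ENNReal.tendsto_zero_of_tendsto_natCast_mul one_ne_top hlim)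

lemma RegVaryingNorm.limsup_le_ofReal [IsFiniteMeasure P] (hmeas : Measurable ξ)
    (hrv : RegVaryingNorm P ξ α)
    (hlim : Tendsto (fun n : ℕ ↦ (n : ℝ≥0∞) * P {ω | a n < ‖ξ ω‖}) atTop (𝓝 1))
    {u δ r : ℝ} (hu : 1 < u) (hδ : 0 ≤ δ) (hr : u ^ (-α) < r) (hur : u ^ δ * r < 1) :
    limsup (fun n : ℕ ↦ (n : ℝ≥0∞) *
        ∫⁻ ω in {ω | a n < ‖ξ ω‖}, ENNReal.ofReal ((‖ξ ω‖ / a n) ^ δ) ∂P) atTop ≤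
      ENNReal.ofReal (1 + (u ^ δ - 1) / (1 - u ^ δ * r)) := by
  rw [← ENNReal.one_add_ofReal_tsub_mul_inv (Real.one_le_rpow hu.le hδ)
    ((Real.rpow_pos_of_pos (by linarith) _).trans hr).le hur]
  exact limsup_mul_setLIntegral_rpow_div_le hmeas.norm (hrv.tendsto_atTop hlim) hlim hu hδ
    (hrv.eventually_measure_le_mul (by linarith) hr)

lemma RegVaryingNorm.limsup_le_of_one_lt [IsFiniteMeasure P] (hmeas : Measurable ξ)
    (hrv : RegVaryingNorm P ξ α)
    (hlim : Tendsto (fun n : ℕ ↦ (n : ℝ≥0∞) * P {ω | a n < ‖ξ ω‖}) atTop (𝓝 1))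
    {u δ : ℝ} (hu : 1 < u) (hδ : 0 ≤ δ) (hδα : δ < α) :
    limsup (fun n : ℕ ↦ (n : ℝ≥0∞) *
        ∫⁻ ω in {ω | a n < ‖ξ ω‖}, ENNReal.ofReal ((‖ξ ω‖ / a n) ^ δ) ∂P) atTop ≤
      ENNReal.ofReal (1 + (u ^ δ - 1) / (1 - u ^ (δ - α))) := by
  have hden : Tendsto (fun r ↦ 1 - u ^ δ * r) (𝓝 (u ^ (-α))) (𝓝 (1 - u ^ (δ - α))) := by
    rw [sub_eq_add_neg δ, Real.rpow_add (by linarith)]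
    exact (continuous_const.sub (continuous_const.mul continuous_id)).tendsto _
  have hden_pos : 0 < 1 - u ^ (δ - α) :=
    sub_pos.2 (Real.rpow_lt_one_of_one_lt_of_neg hu (by linarith))
  refine ge_of_tendsto ((ENNReal.tendsto_ofReal
    (tendsto_const_nhds.add (tendsto_const_nhds.div hden hden_pos.ne'))).mono_left
    (nhdsWithin_le_nhds (s := Set.Ioi (u ^ (-α))))) ?_
  filter_upwards [self_mem_nhdsWithin,
    nhdsWithin_le_nhds (hden.eventually (lt_mem_nhds hden_pos))] with r hr hr'
  exact hrv.limsup_le_ofReal hmeas hlim hu hδ hr (by linarith)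

end RegVarying

theorem stmt12_general {Ω : Type*} [MeasurableSpace Ω] (P : Measure Ω) [IsProbabilityMeasure P]
    {d : ℕ} (ξ : Ω → (Fin d → ℝ)) (hmeas : Measurable ξ)
    {α : ℝ} (hrv : RegVaryingNorm P ξ α)
    (a : ℕ → ℝ)
    (hlim : Tendsto (fun n : ℕ => (n : ℝ) * (P {ω | a n < ‖ξ ω‖}).toReal) atTop (nhds 1)) :
    ∀ δ : ℝ, 0 < δ → δ < α →
      limsup (fun n : ℕ => (n : ℝ≥0∞) *
          ∫⁻ ω in {ω | a n < ‖ξ ω‖}, ENNReal.ofReal ((‖ξ ω‖ / a n) ^ δ) ∂P) atTop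
        ≤ ENNReal.ofReal (α / (α - δ)) := by
  intro δ hδ hδα
  have hlim' : Tendsto (fun n : ℕ ↦ (n : ℝ≥0∞) * P {ω | a n < ‖ξ ω‖}) atTop (𝓝 1) := by
    simpa [ofReal_mul, ofReal_toReal] using ENNReal.tendsto_ofReal hlim
  refine ge_of_tendsto
    (ENNReal.tendsto_ofReal (tendsto_one_add_rpow_sub_one_div_one_sub_rpow hδα)) ?_
  filter_upwards [self_mem_nhdsWithin] with u hu
  exact hrv.limsup_le_of_one_lt hmeas hlim' hu hδ.le hδα

/-- Karamata-type bound: if `ξ` has regularly varying norm with index `α > 0` and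
`n·P(‖ξ‖ > a_n) → 1`, then for every `δ ∈ (0,α)`,
`limsup_n n·E[(‖ξ‖/a_n)^δ · 1_{‖ξ‖ > a_n}] ≤ α/(α − δ)`. -/
theorem stmt12 {Ω : Type*} [MeasurableSpace Ω] (P : Measure Ω) [IsProbabilityMeasure P]
    {d : ℕ} (ξ : Ω → (Fin d → ℝ)) (hmeas : Measurable ξ)
    {α : ℝ} (hα : 0 < α) (hrv : RegVaryingNorm P ξ α)
    (a : ℕ → ℝ) (ha : ∀ n, 0 < a n)
    (hlim : Tendsto (fun n : ℕ => (n : ℝ) * (P {ω | a n < ‖ξ ω‖}).toReal) atTop (nhds 1)) :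
    ∀ δ : ℝ, 0 < δ → δ < α →
      limsup (fun n : ℕ => (n : ℝ≥0∞) *
          ∫⁻ ω in {ω | a n < ‖ξ ω‖}, ENNReal.ofReal ((‖ξ ω‖ / a n) ^ δ) ∂P) atTop
        ≤ ENNReal.ofReal (α / (α - δ)) :=
  stmt12_general P ξ hmeas hrv a hlim

end
end

section
/- Let (Z_i)_{i∈ℤ} be a strictly stationary sequence of ℝ^d-valued random vectors whose norm is regularly varying with index α > 0, which is pairwise asymptotically independent, i.e. lim_{x→∞} P(‖Z_i‖ > x, ‖Z_j‖ > x)/P(‖Z_1‖ > x) = 0 for all i ≠ j, and whose components are asymptotically independent, i.e. for all j ≠ k in {1,…,d}, lim_{x→∞} P(|Z_1^{(j)}| > x, |Z_1^{(k)}| > x)/P(|Z_1^{(k)}| > x) = 0 (with the convention 0/0 = 0). Let (a_n) be positive reals with lim_{n→∞} n·P(‖Z_1‖ > a_n) = 1, and let D be an almost surely finite nonnegative random variable independent of (Z_i). Then for every integer m ≥ 0 and every c > 0, lim_{n→∞} P( ∃ j ∈ {1,…,n}, ∃ l₁, l₂ ∈ {0,…,m} and ∃ s₁, s₂ ∈ {1,…,d}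 with (l₁,s₁) ≠ (l₂,s₂) such that D·|Z_{j−l₁}^{(s₁)}| > c·a_n and D·|Z_{j−l₂}^{(s₂)}| > c·a_n ) = 0. -/
open MeasureTheory Filter

noncomputable section

def StrictlyStationary {Ω : Type*} [MeasurableSpace Ω] (P : Measure Ω) {E : Type*}
    [MeasurableSpace E] (Z : ℤ → Ω → E) : Prop :=
  ∀ (n : ℕ) (h : ℤ),
    Measure.map (fun ω => fun i : Fin n => Z (1 + (i : ℤ) + h) ω) P =
      Measure.map (fun ω => fun i : Fin n => Z (1 + (i : ℤ)) ω) P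

/-
Union bound over the window `j ∈ [1, n]` and the pairs `(l₁, s₁) ≠ (l₂, s₂)`; by stationarity
each of the `n` terms of a fixed pair has the probability of the pair shifted to `j = 0`. Writing
`p(x) = P(‖Z₁‖ > x)`, such a term factors as
`n p(aₙ) · p(c aₙ)/p(aₙ) · P(pair > c aₙ)/p(c aₙ) → 1 · c^{-α} · 0`, the last factor vanishing by
pairwise asymptotic independence when the time indices differ and by asymptotic independence of
the components when they agree. The weight `D` is removed by truncation: on `{D ≤ M}` the event
lies in the unweighted one at level `c/M`, and `P(D > M)` is small for large `M`.
-/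

open scoped ENNReal Topology

lemma div_le_div_of_le_of_le_left {a b c : ℝ} (ha : 0 ≤ a) (hab : a ≤ b) (hbc : b ≤ c) :
    a / c ≤ a / b := by
  rcases (ha.trans hab).eq_or_lt with rfl | hb
  · simp [le_antisymm hab ha]
  · exact div_le_div_of_nonneg_left ha hb hbc

lemma tendsto_atTop_of_tendsto_natCast_mul {g : ℝ → ℝ} {a : ℕ → ℝ} {L : ℝ} (hg : Antitone g)
    (hpos : ∀ x, 0 < x → 0 < g x) (h : Tendsto (fun n : ℕ => n * g (a n)) atTop (𝓝 L)) :
    Tendsto a atTop atTop := by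
  have hg0 : Tendsto (fun n => g (a n)) atTop (𝓝 0) := by
    refine (h.div_atTop tendsto_natCast_atTop_atTop).congr' ?_
    filter_upwards [eventually_ne_atTop 0] with n hn
    field_simp
  refine tendsto_atTop.2 fun b => ?_
  filter_upwards [hg0.eventually_lt_const (hpos _ (lt_max_of_lt_right one_pos : 0 < max b 1))]
    with n hn
  by_contra! hab
  exact hn.not_ge (hg (hab.le.trans (le_max_left b 1)))

lemma tendsto_natCast_mul_comp_const_mul {f g : ℝ → ℝ} {a : ℕ → ℝ} {c ℓ L : ℝ}
    (hg : ∀ x, 0 < x → 0 < g x) (hc : 0 < c) (ha : Tendsto a atTop atTop)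
    (hna : Tendsto (fun n : ℕ => n * g (a n)) atTop (𝓝 L))
    (hscale : Tendsto (fun x => g (c * x) / g x) atTop (𝓝 ℓ))
    (hfg : Tendsto (fun x => f x / g x) atTop (𝓝 0)) :
    Tendsto (fun n : ℕ => n * f (c * a n)) atTop (𝓝 0) := by
  have hlim := (hna.mul (hscale.comp ha)).mul (hfg.comp (ha.const_mul_atTop hc))
  rw [mul_zero] at hlim
  refine hlim.congr' ?_
  filter_upwards [ha.eventually_gt_atTop 0] with n hn
  have h₁ := (hg _ hn).ne'
  have h₂ := (hg _ (mul_pos hc hn)).ne'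
  simp only [Function.comp_apply]
  field_simp

lemma tendsto_measure_of_subset_union {Ω ι : Type*} [MeasurableSpace Ω] {μ : Measure Ω}
    {l : Filter ι} {E : ι → Set Ω} {G : ℕ → Set Ω} {F : ℕ → ι → Set Ω}
    (hG : Tendsto (fun M => μ (G M)) atTop (𝓝 0)) (hF : ∀ M, Tendsto (μ ∘ F M) l (𝓝 0))
    (hsub : ∀ M i, E i ⊆ G M ∪ F M i) : Tendsto (μ ∘ E) l (𝓝 0) := by
  rw [ENNReal.tendsto_nhds_zero] at hG ⊢
  intro ε hε
  have hε₂ : 0 < ε / 2 := ENNReal.half_pos hε.ne'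
  obtain ⟨M, hM⟩ := (hG _ hε₂).exists
  filter_upwards [ENNReal.tendsto_nhds_zero.1 (hF M) _ hε₂] with i hi
  calc μ (E i) ≤ μ (G M) + μ (F M i) := (measure_mono (hsub M i)).trans (measure_union_le _ _)
    _ ≤ ε / 2 + ε / 2 := add_le_add hM hi
    _ = ε := ENNReal.add_halves ε

lemma tendsto_measure_lt_atTop {Ω : Type*} [MeasurableSpace Ω] {μ : Measure Ω}
    [IsFiniteMeasure μ] {D : Ω → ℝ} (hD : AEMeasurable D μ) :
    Tendsto (fun M : ℕ => μ {ω | (M : ℝ) < D ω}) atTop (𝓝 0) := by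
  have hempty : ⋂ M : ℕ, {ω | (M : ℝ) < D ω} = ∅ :=
    Set.iInter_eq_empty_iff.2 fun ω => (exists_nat_ge (D ω)).imp fun _ => not_lt.2
  have := tendsto_measure_iInter_atTop (μ := μ)
    (fun M : ℕ => nullMeasurableSet_lt aemeasurable_const hD)
    (fun M N hMN ω (hω : (N : ℝ) < D ω) => (Nat.cast_le.2 hMN).trans_lt hω)
    ⟨0, measure_ne_top μ _⟩
  rwa [hempty, measure_empty] at this

namespace StrictlyStationary

variable {Ω E : Type*} [MeasurableSpace Ω] [MeasurableSpace E] {P : Measure Ω} {Z : ℤ → Ω → E}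

lemma measure_preimage_window (hstat : StrictlyStationary P Z) (hZ : ∀ i, Measurable (Z i))
    {n : ℕ} {A : Set (Fin n → E)} (hA : MeasurableSet A) (h : ℤ) :
    P ((fun ω (i : Fin n) => Z (1 + i + h) ω) ⁻¹' A) =
      P ((fun ω (i : Fin n) => Z (1 + i) ω) ⁻¹' A) := by
  rw [← Measure.map_apply (by fun_prop) hA, ← Measure.map_apply (by fun_prop) hA, hstat n h]

lemma measure_pair_add_natCast (hstat : StrictlyStationary P Z) (hZ : ∀ i, Measurable (Z i))
    {B₁ B₂ : Set E} (hB₁ : MeasurableSet B₁) (hB₂ : MeasurableSet B₂) (h : ℤ) (k : ℕ) :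
    P {ω | Z (1 + h) ω ∈ B₁ ∧ Z (1 + k + h) ω ∈ B₂} =
      P {ω | Z 1 ω ∈ B₁ ∧ Z (1 + k) ω ∈ B₂} := by
  have hA : MeasurableSet {v : Fin (k + 1) → E | v 0 ∈ B₁ ∧ v (Fin.last k) ∈ B₂} :=
    (hB₁.preimage (measurable_pi_apply 0)).inter (hB₂.preimage (measurable_pi_apply _))
  simpa using hstat.measure_preimage_window hZ hA h

lemma measure_pair_add (hstat : StrictlyStationary P Z) (hZ : ∀ i, Measurable (Z i))
    {B₁ B₂ : Set E} (hB₁ : MeasurableSet B₁) (hB₂ : MeasurableSet B₂) (j i₁ i₂ : ℤ) :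
    P {ω | Z (j + i₁) ω ∈ B₁ ∧ Z (j + i₂) ω ∈ B₂} = P {ω | Z i₁ ω ∈ B₁ ∧ Z i₂ ω ∈ B₂} := by
  wlog h : i₁ ≤ i₂ generalizing B₁ B₂ i₁ i₂
  · have hswap : ∀ i i' : ℤ, {ω | Z i ω ∈ B₁ ∧ Z i' ω ∈ B₂} = {ω | Z i' ω ∈ B₂ ∧ Z i ω ∈ B₁} :=
      fun _ _ => Set.ext fun _ => and_comm
    rw [hswap, hswap]
    exact this hB₂ hB₁ i₂ i₁ (le_of_not_ge h)
  obtain ⟨k, rfl⟩ : ∃ k : ℕ, i₂ = i₁ + k := ⟨(i₂ - i₁).toNat, by omega⟩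
  have h₁ := hstat.measure_pair_add_natCast hZ hB₁ hB₂ (j + i₁ - 1) k
  have h₂ := hstat.measure_pair_add_natCast hZ hB₁ hB₂ (i₁ - 1) k
  rw [show 1 + (j + i₁ - 1) = j + i₁ by ring, show 1 + k + (j + i₁ - 1) = j + (i₁ + k) by ring]
    at h₁
  rw [show 1 + (i₁ - 1) = i₁ by ring, show 1 + k + (i₁ - 1) = i₁ + k by ring] at h₂
  rw [h₁, h₂]

end StrictlyStationary

section Exceedances

variable {Ω : Type*} {d : ℕ} {Z : ℤ → Ω → (Fin d → ℝ)}

def pairExceedance (Z : ℤ → Ω → (Fin d → ℝ)) (i₁ i₂ : ℤ) (s₁ s₂ : Fin d) (x : ℝ) : Set Ω :=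
  {ω | x < |Z i₁ ω s₁| ∧ x < |Z i₂ ω s₂|}

def jointExceedance (Z : ℤ → Ω → (Fin d → ℝ)) (m n : ℕ) (x : ℝ) : Set Ω :=
  {ω | ∃ j ∈ Finset.Icc (1 : ℤ) (n : ℤ), ∃ l₁ ∈ Finset.Icc 0 m,
    ∃ l₂ ∈ Finset.Icc 0 m, ∃ s₁ s₂ : Fin d, ((l₁, s₁) ≠ (l₂, s₂)) ∧
    x < |Z (j - (l₁ : ℤ)) ω s₁| ∧ x < |Z (j - (l₂ : ℤ)) ω s₂|}

def weightedJointExceedance (Z : ℤ → Ω → (Fin d → ℝ)) (D : Ω → ℝ) (m n : ℕ) (x : ℝ) :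
    Set Ω :=
  {ω | ∃ j ∈ Finset.Icc (1 : ℤ) (n : ℤ), ∃ l₁ ∈ Finset.Icc 0 m,
    ∃ l₂ ∈ Finset.Icc 0 m, ∃ s₁ s₂ : Fin d, ((l₁, s₁) ≠ (l₂, s₂)) ∧
    x < D ω * |Z (j - (l₁ : ℤ)) ω s₁| ∧ x < D ω * |Z (j - (l₂ : ℤ)) ω s₂|}

lemma weightedJointExceedance_subset (D : Ω → ℝ) (m n : ℕ) {M : ℝ} (hM : 0 < M) (x : ℝ) :
    weightedJointExceedance Z D m n x ⊆ {ω | M < D ω} ∪ jointExceedance Z m n (x / M) := by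
  rintro ω ⟨j, hj, l₁, hl₁, l₂, hl₂, s₁, s₂, hne, h₁, h₂⟩
  refine or_iff_not_imp_left.2 fun hD => ⟨j, hj, l₁, hl₁, l₂, hl₂, s₁, s₂, hne, ?_, ?_⟩
  all_goals
    rw [div_lt_iff₀' hM]
    exact lt_of_lt_of_le ‹_› (mul_le_mul_of_nonneg_right (not_lt.1 hD) (abs_nonneg _))

lemma jointExceedance_subset (Z : ℤ → Ω → (Fin d → ℝ)) (m n : ℕ) (x : ℝ) :
    jointExceedance Z m n x ⊆ ⋃ j ∈ Finset.Icc (1 : ℤ) n,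
      ⋃ p ∈ (Finset.Icc 0 m ×ˢ (Finset.univ : Finset (Fin d))).offDiag,
        pairExceedance Z (j - p.1.1) (j - p.2.1) p.1.2 p.2.2 x := by
  rintro ω ⟨j, hj, l₁, hl₁, l₂, hl₂, s₁, s₂, hne, h₁, h₂⟩
  simp only [Set.mem_iUnion]
  exact ⟨j, hj, ((l₁, s₁), (l₂, s₂)), by simp_all, h₁, h₂⟩

variable [MeasurableSpace Ω] {P : Measure Ω}

lemma measure_pairExceedance_add (hstat : StrictlyStationary P Z) (hZ : ∀ i, Measurable (Z i))
    (j i₁ i₂ : ℤ) (s₁ s₂ : Fin d) (x : ℝ) :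
    P (pairExceedance Z (j + i₁) (j + i₂) s₁ s₂ x) = P (pairExceedance Z i₁ i₂ s₁ s₂ x) :=
  hstat.measure_pair_add hZ (measurableSet_lt measurable_const (measurable_pi_apply s₁).abs)
    (measurableSet_lt measurable_const (measurable_pi_apply s₂).abs) j i₁ i₂

lemma measure_jointExceedance_le (hstat : StrictlyStationary P Z) (hZ : ∀ i, Measurable (Z i))
    (m n : ℕ) (x : ℝ) :
    P (jointExceedance Z m n x) ≤
      ∑ p ∈ (Finset.Icc 0 m ×ˢ (Finset.univ : Finset (Fin d))).offDiag,
        n * P (pairExceedance Z (-p.1.1) (-p.2.1) p.1.2 p.2.2 x) := by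
  calc P (jointExceedance Z m n x)
      ≤ ∑ j ∈ Finset.Icc (1 : ℤ) n,
          ∑ p ∈ (Finset.Icc 0 m ×ˢ (Finset.univ : Finset (Fin d))).offDiag,
            P (pairExceedance Z (j - p.1.1) (j - p.2.1) p.1.2 p.2.2 x) :=
        (measure_mono (jointExceedance_subset Z m n x)).trans <|
          (measure_biUnion_finset_le _ _).trans <|
            Finset.sum_le_sum fun j _ => measure_biUnion_finset_le _ _
    _ = ∑ j ∈ Finset.Icc (1 : ℤ) n,
          ∑ p ∈ (Finset.Icc 0 m ×ˢ (Finset.univ : Finset (Fin d))).offDiag,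
            P (pairExceedance Z (-p.1.1) (-p.2.1) p.1.2 p.2.2 x) := by
        refine Finset.sum_congr rfl fun j _ => Finset.sum_congr rfl fun p _ => ?_
        simpa only [sub_eq_add_neg] using measure_pairExceedance_add hstat hZ j _ _ _ _ x
    _ = _ := by
        rw [Finset.sum_const, Int.card_Icc, nsmul_eq_mul, Finset.mul_sum]
        simp

lemma tendsto_measure_pairExceedance_div [IsFiniteMeasure P] (hstat : StrictlyStationary P Z)
    (hZ : ∀ i, Measurable (Z i))
    (hpai : ∀ i j : ℤ, i ≠ j →
      Tendsto (fun x : ℝ =>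
          (P {ω | x < ‖Z i ω‖ ∧ x < ‖Z j ω‖}).toReal / (P {ω | x < ‖Z 1 ω‖}).toReal)
        atTop (𝓝 0))
    (hcai : ∀ j k : Fin d, j ≠ k →
      Tendsto (fun x : ℝ =>
          (P {ω | x < |Z 1 ω j| ∧ x < |Z 1 ω k|}).toReal / (P {ω | x < |Z 1 ω k|}).toReal)
        atTop (𝓝 0))
    {i₁ i₂ : ℤ} {s₁ s₂ : Fin d} (hne : (i₁, s₁) ≠ (i₂, s₂)) :
    Tendsto (fun x => (P (pairExceedance Z i₁ i₂ s₁ s₂ x)).toReal / (P {ω | x < ‖Z 1 ω‖}).toReal)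
      atTop (𝓝 0) := by
  have hmono : ∀ {A B : Set Ω}, A ⊆ B → (P A).toReal ≤ (P B).toReal :=
    fun h => ENNReal.toReal_mono (measure_ne_top P _) (measure_mono h)
  have habs_le_norm : ∀ (i : ℤ) (s : Fin d) (x : ℝ) (ω : Ω), x < |Z i ω s| → x < ‖Z i ω‖ :=
    fun i s x ω h => h.trans_le (by simpa using norm_le_pi_norm (Z i ω) s)
  rcases eq_or_ne i₁ i₂ with rfl | hi
  · have hs : s₁ ≠ s₂ := fun h => hne (h ▸ rfl)
    refine squeeze_zero (fun x => by positivity) (fun x => ?_) (hcai s₁ s₂ hs)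
    rw [← sub_add_cancel i₁ 1, measure_pairExceedance_add hstat hZ]
    exact div_le_div_of_le_of_le_left ENNReal.toReal_nonneg (hmono fun ω hω => hω.2)
      (hmono fun ω => habs_le_norm 1 s₂ _ ω)
  · refine squeeze_zero (fun x => by positivity) (fun x => ?_) (hpai i₁ i₂ hi)
    exact div_le_div_of_nonneg_right
      (hmono fun ω hω => ⟨habs_le_norm _ _ _ ω hω.1, habs_le_norm _ _ _ ω hω.2⟩)
      ENNReal.toReal_nonneg

lemma tendsto_measure_jointExceedance [IsFiniteMeasure P] (hstat : StrictlyStationary P Z)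
    (hZ : ∀ i, Measurable (Z i)) {α : ℝ} (hrv : RegVaryingNorm P (Z 1) α)
    (hpai : ∀ i j : ℤ, i ≠ j →
      Tendsto (fun x : ℝ =>
          (P {ω | x < ‖Z i ω‖ ∧ x < ‖Z j ω‖}).toReal / (P {ω | x < ‖Z 1 ω‖}).toReal)
        atTop (𝓝 0))
    (hcai : ∀ j k : Fin d, j ≠ k →
      Tendsto (fun x : ℝ =>
          (P {ω | x < |Z 1 ω j| ∧ x < |Z 1 ω k|}).toReal / (P {ω | x < |Z 1 ω k|}).toReal)
        atTop (𝓝 0))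
    {a : ℕ → ℝ}
    (hlim : Tendsto (fun n : ℕ => (n : ℝ) * (P {ω | a n < ‖Z 1 ω‖}).toReal) atTop (𝓝 1))
    (m : ℕ) {c : ℝ} (hc : 0 < c) :
    Tendsto (fun n => P (jointExceedance Z m n (c * a n))) atTop (𝓝 0) := by
  have hanti : Antitone fun x : ℝ => (P {ω | x < ‖Z 1 ω‖}).toReal := fun x y hxy =>
    ENNReal.toReal_mono (measure_ne_top P _) (measure_mono fun ω hω => hxy.trans_lt hω)
  have ha := tendsto_atTop_of_tendsto_natCast_mul hanti hrv.1 hlim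
  have hterm : ∀ p ∈ (Finset.Icc 0 m ×ˢ (Finset.univ : Finset (Fin d))).offDiag,
      Tendsto (fun n : ℕ => n * P (pairExceedance Z (-p.1.1) (-p.2.1) p.1.2 p.2.2 (c * a n)))
        atTop (𝓝 0) := by
    rintro ⟨⟨l₁, s₁⟩, ⟨l₂, s₂⟩⟩ hp
    have hne : (-(l₁ : ℤ), s₁) ≠ (-(l₂ : ℤ), s₂) := by
      simp only [Finset.mem_offDiag, ne_eq, Prod.mk.injEq] at hp ⊢
      omega
    have hreal := tendsto_natCast_mul_comp_const_mul hrv.1 hc ha hlim (hrv.2 c hc)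
      (tendsto_measure_pairExceedance_div hstat hZ hpai hcai hne)
    simpa [ENNReal.ofReal_mul, ENNReal.ofReal_toReal] using ENNReal.tendsto_ofReal hreal
  refine tendsto_of_tendsto_of_tendsto_of_le_of_le tendsto_const_nhds
    (by simpa using tendsto_finsetSum _ hterm) (fun n => zero_le)
    (fun n => measure_jointExceedance_le hstat hZ m n _)

end Exceedances

theorem stmt16_general {Ω : Type*} [MeasurableSpace Ω] (P : Measure Ω) [IsProbabilityMeasure P]
    {d : ℕ} (Z : ℤ → Ω → (Fin d → ℝ)) (hZmeas : ∀ i, Measurable (Z i))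
    (hstat : StrictlyStationary P Z)
    {α : ℝ} (hrv : RegVaryingNorm P (Z 1) α)
    (hpai : ∀ i j : ℤ, i ≠ j →
      Tendsto (fun x : ℝ =>
          (P {ω | x < ‖Z i ω‖ ∧ x < ‖Z j ω‖}).toReal / (P {ω | x < ‖Z 1 ω‖}).toReal)
        atTop (nhds 0))
    (hcai : ∀ j k : Fin d, j ≠ k →
      Tendsto (fun x : ℝ =>
          (P {ω | x < |Z 1 ω j| ∧ x < |Z 1 ω k|}).toReal / (P {ω | x < |Z 1 ω k|}).toReal)
        atTop (nhds 0))
    (a : ℕ → ℝ)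
    (hlim : Tendsto (fun n : ℕ => (n : ℝ) * (P {ω | a n < ‖Z 1 ω‖}).toReal) atTop (nhds 1))
    (D : Ω → ℝ) (hDmeas : Measurable D) :
    ∀ m : ℕ, ∀ c : ℝ, 0 < c →
      Tendsto (fun n : ℕ =>
          (P {ω | ∃ j ∈ Finset.Icc (1 : ℤ) (n : ℤ), ∃ l₁ ∈ Finset.Icc 0 m,
              ∃ l₂ ∈ Finset.Icc 0 m, ∃ s₁ s₂ : Fin d, ((l₁, s₁) ≠ (l₂, s₂)) ∧
              c * a n < D ω * |Z (j - (l₁ : ℤ)) ω s₁| ∧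
              c * a n < D ω * |Z (j - (l₂ : ℤ)) ω s₂|}).toReal)
        atTop (nhds 0) := by
  intro m c hc
  have hM : ∀ M : ℕ, (0 : ℝ) < (M + 1 : ℕ) := fun M => Nat.cast_pos.2 M.succ_pos
  have hjoint : ∀ M : ℕ,
      Tendsto (fun n => P (jointExceedance Z m n (c * a n / (M + 1 : ℕ)))) atTop (𝓝 0) :=
    fun M => (tendsto_measure_jointExceedance hstat hZmeas hrv hpai hcai hlim m
      (div_pos hc (hM M))).congr fun n => by rw [div_mul_eq_mul_div]
  have hweighted : Tendsto (fun n => P (weightedJointExceedance Z D m n (c * a n))) atTop (𝓝 0) :=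
    tendsto_measure_of_subset_union
      ((tendsto_measure_lt_atTop hDmeas.aemeasurable).comp (tendsto_add_atTop_nat 1)) hjoint
      fun M n => weightedJointExceedance_subset D m n (hM M) _
  exact ENNReal.toReal_zero ▸ (ENNReal.tendsto_toReal ENNReal.zero_ne_top).comp hweighted

/-- For a stationary regularly varying sequence, pairwise asymptotically independent and with
asymptotically independent components, and `D` nonnegative independent of `(Z_i)`, the
probability that for some `j ∈ {1,…,n}` two distinct pairs `(l₁,s₁) ≠ (l₂,s₂)` with
`l₁, l₂ ∈ {0,…,m}` satisfy `D|Z_{j−l₁}^{(s₁)}| > c a_n` and `D|Z_{j−l₂}^{(s₂)}| > c a_n`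
tends to `0`. -/
theorem stmt16 {Ω : Type*} [MeasurableSpace Ω] (P : Measure Ω) [IsProbabilityMeasure P]
    {d : ℕ} (Z : ℤ → Ω → (Fin d → ℝ)) (hZmeas : ∀ i, Measurable (Z i))
    (hstat : StrictlyStationary P Z)
    {α : ℝ} (hα : 0 < α) (hrv : RegVaryingNorm P (Z 1) α)
    (hpai : ∀ i j : ℤ, i ≠ j →
      Tendsto (fun x : ℝ =>
          (P {ω | x < ‖Z i ω‖ ∧ x < ‖Z j ω‖}).toReal / (P {ω | x < ‖Z 1 ω‖}).toReal)
        atTop (nhds 0))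
    (hcai : ∀ j k : Fin d, j ≠ k →
      Tendsto (fun x : ℝ =>
          (P {ω | x < |Z 1 ω j| ∧ x < |Z 1 ω k|}).toReal / (P {ω | x < |Z 1 ω k|}).toReal)
        atTop (nhds 0))
    (a : ℕ → ℝ) (ha : ∀ n, 0 < a n)
    (hlim : Tendsto (fun n : ℕ => (n : ℝ) * (P {ω | a n < ‖Z 1 ω‖}).toReal) atTop (nhds 1))
    (D : Ω → ℝ) (hDmeas : Measurable D) (hD0 : ∀ᵐ ω ∂P, 0 ≤ D ω)
    (hindep : ProbabilityTheory.Indep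
      (MeasurableSpace.comap D inferInstance)
      (⨆ i : ℤ, MeasurableSpace.comap (Z i) inferInstance) P) :
    ∀ m : ℕ, ∀ c : ℝ, 0 < c →
      Tendsto (fun n : ℕ =>
          (P {ω | ∃ j ∈ Finset.Icc (1 : ℤ) (n : ℤ), ∃ l₁ ∈ Finset.Icc 0 m,
              ∃ l₂ ∈ Finset.Icc 0 m, ∃ s₁ s₂ : Fin d, ((l₁, s₁) ≠ (l₂, s₂)) ∧
              c * a n < D ω * |Z (j - (l₁ : ℤ)) ω s₁| ∧
              c * a n < D ω * |Z (j - (l₂ : ℤ)) ω s₂|}).toReal)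
        atTop (nhds 0) :=
  stmt16_general P Z hZmeas hstat hrv hpai hcai a hlim D hDmeas

end
end

section
/- Let (T_i)_{i∈ℤ} be a sequence of i.i.d. unit Fréchet random variables, i.e. P(T_i ≤ x) = e^{−1/x} for x > 0 and T_i > 0 almost surely, and let (a_n) be a sequence of positive reals with lim_{n→∞} n·P(T_1 > a_n) = 1/2. Then for every ε > 0, limsup_{n→∞} P( ∃ i ∈ {1,…,n−1} and ∃ k ∈ {−n,…,3} \ {0} such that T_i > ε·a_n and T_{i+k} > ε·a_n/8 ) ≤ 2·ε^{−2}. -/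
/-!
Each event in the union is `{T_i > ε a_n} ∩ {T_{i+k} > ε a_n / 8}` for two distinct indices, so by
independence and the union bound over at most `n (n + 4)` pairs its probability is at most
`n (n + 4) P(T > ε a_n) P(T > ε a_n / 8)`. Since the Fréchet tail `1 - e^{-1/x}` is asymptotic to
`1/x`, the normalisation `n P(T > a_n) → 1/2` forces `a_n → ∞` and `n P(T > c a_n) → 1/(2c)`, so
the bound tends to `(1/(2ε)) (8/(2ε)) = 2/ε²`.
-/

open MeasureTheory Filter ProbabilityTheory Asymptotics Topology

noncomputable def frechetTail (x : ℝ) : ℝ := 1 - Real.exp (-1 / x)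

lemma frechetTail_eq_one_sub_exp_neg_inv (x : ℝ) : frechetTail x = 1 - Real.exp (-x⁻¹) := by
  rw [frechetTail, neg_div, one_div]

lemma isEquivalent_one_sub_exp_neg : (fun t : ℝ => 1 - Real.exp (-t)) ~[𝓝 0] fun t => t := by
  have h : HasDerivAt (fun t : ℝ => 1 - Real.exp (-t)) 1 0 := by
    simpa using ((Real.hasDerivAt_exp (-0)).comp (0 : ℝ) (hasDerivAt_neg 0)).const_sub 1
  simpa [IsEquivalent, Pi.sub_def] using h.isLittleO

lemma frechetTail_isEquivalent_inv : frechetTail ~[atTop] fun x => x⁻¹ := by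
  simpa [Function.comp_def, ← frechetTail_eq_one_sub_exp_neg_inv] using
    isEquivalent_one_sub_exp_neg.comp_tendsto tendsto_inv_atTop_zero

lemma tendsto_atTop_of_frechetTail_tendsto_zero {α : Type*} {l : Filter α} {a : α → ℝ}
    (ha : ∀ x, 0 < a x) (h : Tendsto (fun x => frechetTail (a x)) l (𝓝 0)) :
    Tendsto a l atTop := by
  have hinv : Tendsto (fun x => (a x)⁻¹) l (𝓝 0) := by
    have hexp : Tendsto (fun x => 1 - frechetTail (a x)) l (𝓝 1) := by
      simpa using tendsto_const_nhds.sub h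
    have hlog := ((Real.continuousAt_log one_ne_zero).tendsto.comp hexp).neg
    simpa [Function.comp_def, frechetTail_eq_one_sub_exp_neg_inv] using hlog
  simpa [Pi.inv_def] using (tendsto_nhdsWithin_iff.mpr
    ⟨hinv, .of_forall fun x => inv_pos.mpr (ha x)⟩).inv_tendsto_nhdsGT_zero

lemma tendsto_nat_mul_frechetTail_const_mul {a : ℕ → ℝ} (ha : ∀ n, 0 < a n) {L : ℝ}
    (h : Tendsto (fun n => n * frechetTail (a n)) atTop (𝓝 L)) {c : ℝ} (hc : 0 < c) :
    Tendsto (fun n => n * frechetTail (c * a n)) atTop (𝓝 (L / c)) := by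
  have htail : Tendsto (fun n => frechetTail (a n)) atTop (𝓝 0) := by
    refine (h.div_atTop tendsto_natCast_atTop_atTop).congr' ?_
    filter_upwards [eventually_ne_atTop 0] with n hn
    field_simp
  have ha_top : Tendsto a atTop atTop := tendsto_atTop_of_frechetTail_tendsto_zero ha htail
  have hequiv {b : ℕ → ℝ} (hb : Tendsto b atTop atTop) :
      (fun n => n * frechetTail (b n)) ~[atTop] fun n => n * (b n)⁻¹ :=
    IsEquivalent.refl.mul (frechetTail_isEquivalent_inv.comp_tendsto hb)
  have hna : Tendsto (fun n => n * (a n)⁻¹) atTop (𝓝 L) := (hequiv ha_top).tendsto_nhds h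
  refine (hequiv (ha_top.const_mul_atTop hc)).symm.tendsto_nhds ?_
  simpa [mul_inv, div_eq_mul_inv, mul_comm, mul_left_comm, mul_assoc] using hna.div_const c

lemma ProbabilityTheory.IndepFun.measureReal_inter_preimage_eq_mul {Ω β γ : Type*}
    [MeasurableSpace Ω] [MeasurableSpace β] [MeasurableSpace γ] {P : Measure Ω}
    {X : Ω → β} {Y : Ω → γ} (h : IndepFun X Y P) {s : Set β} {t : Set γ}
    (hs : MeasurableSet s) (ht : MeasurableSet t) :
    P.real (X ⁻¹' s ∩ Y ⁻¹' t) = P.real (X ⁻¹' s) * P.real (Y ⁻¹' t) := by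
  simp only [measureReal_def, h.measure_inter_preimage_eq_mul s t hs ht, ENNReal.toReal_mul]

section
variable {Ω : Type*} [MeasurableSpace Ω] {P : Measure Ω}

lemma measureReal_lt_eq_frechetTail [IsProbabilityMeasure P] {X : Ω → ℝ} (hX : Measurable X)
    (hcdf : ∀ x, 0 < x → P.real {ω | X ω ≤ x} = Real.exp (-1 / x)) {u : ℝ} (hu : 0 < u) :
    P.real {ω | u < X ω} = frechetTail u := by
  have hcompl : {ω | u < X ω} = {ω | X ω ≤ u}ᶜ := by ext; simp
  rw [hcompl, probReal_compl_eq_one_sub (measurableSet_le hX measurable_const), hcdf u hu,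
    frechetTail]

variable {u v p q : ℝ}

lemma measureReal_exists_lt_and_lt_le {ι κ : Type*} {T : ι → Ω → ℝ} (hindep : iIndepFun T P)
    {f g : κ → ι}
    {s : Finset κ} (hfg : ∀ x ∈ s, f x ≠ g x)
    (hu : ∀ i, P.real {ω | u < T i ω} ≤ p) (hv : ∀ i, P.real {ω | v < T i ω} ≤ q) :
    P.real {ω | ∃ x ∈ s, u < T (f x) ω ∧ v < T (g x) ω} ≤ s.card * (p * q) := by
  have hunion : {ω | ∃ x ∈ s, u < T (f x) ω ∧ v < T (g x) ω} =
      ⋃ x ∈ s, T (f x) ⁻¹' Set.Ioi u ∩ T (g x) ⁻¹' Set.Ioi v := by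
    ext
    simp only [Set.mem_ofPred_eq, Set.mem_iUnion, Set.mem_inter_iff, Set.mem_preimage,
      Set.mem_Ioi, exists_prop]
  have hpair : ∀ x ∈ s, P.real (T (f x) ⁻¹' Set.Ioi u ∩ T (g x) ⁻¹' Set.Ioi v) ≤ p * q := by
    intro x hx
    rw [(hindep.indepFun (hfg x hx)).measureReal_inter_preimage_eq_mul
      measurableSet_Ioi measurableSet_Ioi]
    exact mul_le_mul (hu _) (hv _) measureReal_nonneg (measureReal_nonneg.trans (hu (f x)))
  rw [hunion, ← nsmul_eq_mul]
  exact (measureReal_biUnion_finset_le s _).trans (Finset.sum_le_card_nsmul _ _ _ hpair)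

lemma measureReal_exists_shift_lt_and_lt_le [IsFiniteMeasure P] {T : ℤ → Ω → ℝ}
    (hindep : iIndepFun T P)
    (hu : ∀ i, P.real {ω | u < T i ω} ≤ p) (hv : ∀ i, P.real {ω | v < T i ω} ≤ q) (n : ℕ) :
    P.real {ω | ∃ i ∈ Finset.Icc 1 (n - 1), ∃ k ∈ Finset.Icc (-(n : ℤ)) 3, k ≠ 0 ∧
        u < T (i : ℤ) ω ∧ v < T ((i : ℤ) + k) ω} ≤ n * (n + 4) * (p * q) := by
  set s := Finset.Icc 1 (n - 1) ×ˢ (Finset.Icc (-(n : ℤ)) 3).filter (· ≠ 0)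
  have hcard : s.card ≤ n * (n + 4) := by
    rw [Finset.card_product]
    gcongr
    · simp
    · refine (Finset.card_filter_le _ _).trans ?_
      simp only [Int.card_Icc]
      omega
  have hpq : 0 ≤ p * q :=
    mul_nonneg (measureReal_nonneg.trans (hu 0)) (measureReal_nonneg.trans (hv 0))
  calc _ ≤ P.real {ω | ∃ x ∈ s, u < T x.1 ω ∧ v < T (x.1 + x.2) ω} := by
        refine measureReal_mono ?_
        rintro ω ⟨i, hi, k, hk, hk0, hTi, hTik⟩
        exact ⟨(i, k), Finset.mem_product.mpr ⟨hi, Finset.mem_filter.mpr ⟨hk, hk0⟩⟩, hTi, hTik⟩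
    _ ≤ s.card * (p * q) := by
        refine measureReal_exists_lt_and_lt_le hindep (fun x hx => ?_) hu hv
        have : x.2 ≠ 0 := (Finset.mem_filter.mp (Finset.mem_product.mp hx).2).2
        omega
    _ ≤ n * (n + 4) * (p * q) := by gcongr; exact_mod_cast hcard
end

theorem stmt18_general {Ω : Type*} [MeasurableSpace Ω] (P : Measure Ω) [IsProbabilityMeasure P]
    (T : ℤ → Ω → ℝ) (hmeas : ∀ i, Measurable (T i))
    (hindep : iIndepFun T P)
    (hcdf : ∀ i : ℤ, ∀ x : ℝ, 0 < x → (P {ω | T i ω ≤ x}).toReal = Real.exp (-1 / x))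
    (a : ℕ → ℝ) (ha : ∀ n, 0 < a n)
    (hlim : Tendsto (fun n : ℕ => (n : ℝ) * (P {ω | a n < T 1 ω}).toReal)
      atTop (nhds (1 / 2))) :
    ∀ ε : ℝ, 0 < ε →
      limsup (fun n : ℕ =>
          (P {ω | ∃ i ∈ Finset.Icc 1 (n - 1), ∃ k ∈ Finset.Icc (-(n : ℤ)) 3, k ≠ 0 ∧
              ε * a n < T (i : ℤ) ω ∧ ε * a n / 8 < T ((i : ℤ) + k) ω}).toReal)
        atTop ≤ 2 / ε ^ 2 := by
  intro ε hε
  have htail {u : ℝ} (hu : 0 < u) (i : ℤ) : P.real {ω | u < T i ω} = frechetTail u :=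
    measureReal_lt_eq_frechetTail (hmeas i) (hcdf i) hu
  have hbound (n : ℕ) := measureReal_exists_shift_lt_and_lt_le hindep
    (fun i => (htail (by have := ha n; positivity) i).le)
    (fun i => (htail (by have := ha n; positivity) i).le) (u := ε * a n) (v := ε * a n / 8) n
  have hnorm : Tendsto (fun n : ℕ => n * frechetTail (a n)) atTop (𝓝 (1 / 2)) :=
    hlim.congr fun n => congrArg ((n : ℝ) * ·) (htail (ha n) 1)
  have hε1 := tendsto_nat_mul_frechetTail_const_mul ha hnorm hε
  have hε8 : Tendsto (fun n : ℕ => n * frechetTail (ε * a n / 8)) atTop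
      (𝓝 (1 / 2 / (ε / 8))) := by
    simpa only [div_mul_eq_mul_div] using
      tendsto_nat_mul_frechetTail_const_mul ha hnorm (c := ε / 8) (by positivity)
  have hg : Tendsto (fun n : ℕ => n * (n + 4) * (frechetTail (ε * a n) *
      frechetTail (ε * a n / 8))) atTop (𝓝 (2 / ε ^ 2)) := by
    have := ((hε1.mul hε8).mul ((tendsto_const_div_atTop_nhds_zero_nat 4).const_add 1))
    convert this.congr' ?_ using 2
    · field_simp; norm_num
    · filter_upwards [eventually_ne_atTop 0] with n hn
      field_simp
  refine (limsup_le_limsup (.of_forall hbound) ?_ hg.isBoundedUnder_le).trans_eq hg.limsup_eq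
  exact (isBoundedUnder_of ⟨0, fun n => measureReal_nonneg⟩).isCoboundedUnder_le

/-- For an i.i.d. sequence of unit Fréchet random variables and positive reals `(a_n)` with
`n·P(T_1 > a_n) → 1/2`, for every `ε > 0`,
`limsup_n P(∃ i ∈ {1,…,n−1}, ∃ k ∈ {−n,…,3}\{0}, T_i > ε a_n and T_{i+k} > ε a_n/8) ≤ 2ε^{−2}`. -/
theorem stmt18 {Ω : Type*} [MeasurableSpace Ω] (P : Measure Ω) [IsProbabilityMeasure P]
    (T : ℤ → Ω → ℝ) (hmeas : ∀ i, Measurable (T i))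
    (hindep : iIndepFun T P)
    (hcdf : ∀ i : ℤ, ∀ x : ℝ, 0 < x → (P {ω | T i ω ≤ x}).toReal = Real.exp (-1 / x))
    (hpos : ∀ i : ℤ, ∀ᵐ ω ∂P, 0 < T i ω)
    (a : ℕ → ℝ) (ha : ∀ n, 0 < a n)
    (hlim : Tendsto (fun n : ℕ => (n : ℝ) * (P {ω | a n < T 1 ω}).toReal)
      atTop (nhds (1 / 2))) :
    ∀ ε : ℝ, 0 < ε →
      limsup (fun n : ℕ =>
          (P {ω | ∃ i ∈ Finset.Icc 1 (n - 1), ∃ k ∈ Finset.Icc (-(n : ℤ)) 3, k ≠ 0 ∧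
              ε * a n < T (i : ℤ) ω ∧ ε * a n / 8 < T ((i : ℤ) + k) ω}).toReal)
        atTop ≤ 2 / ε ^ 2 :=
  stmt18_general P T hmeas hindep hcdf a ha hlim
end
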